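/- arXiv:1902.10450 — 2 statements merged into one kernel-verified Lean document; each statement's English description precedes it below -/
import Mathlib

section
/- Let E be a de Branges function, let N be a nearly invariant subspace of H(E) with no common zeros, let k_N be the reproducing kernel of N, and let α ∈ ℂ with Im α ≠ 0. Then k_N(α, α) ≠ 0, k_N(conj α, conj α) ≠ 0, and for all λ ∈ ℂ with λ ≠ conj α and all z ∈ ℂ with z ≠ α: ((z − conj α)/(z − α))·( k_N(λ, z) − (k_N(λ, α)/k_N(α, α))·k_N(α, z) ) − ((conj λ − conj α)/(conj λ − α))·k_N(λ, z) = −((conj λ − conj α)/(conj λ − α))·(k_N(λ, conj α)/k_N(conj α, conj α))·k_N(conj α, z). -/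
open Complex MeasureTheory Filter ComplexConjugate
open scoped ENNReal Topology

noncomputable section

/-- For an entire function `f`, `fStar f z = conj (f (conj z))`. -/
def fStar (f : ℂ → ℂ) : ℂ → ℂ := fun z => conj (f (conj z))

/-- A de Branges function: an entire function `E` with `|E(z)| > |E*(z)|` in the
upper half-plane. -/
def IsDeBrangesFunction (E : ℂ → ℂ) : Prop :=
  Differentiable ℂ E ∧ ∀ z : ℂ, 0 < z.im → ‖fStar E z‖ < ‖E z‖

/-- Membership in the Hardy space `H²(ℂ⁺)`: holomorphic on the upper half-plane with
uniformly bounded `L²`-means on horizontal lines. -/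
def MemHardyH2 (g : ℂ → ℂ) : Prop :=
  DifferentiableOn ℂ g {z : ℂ | 0 < z.im} ∧
  ∃ C : ℝ≥0∞, C < ⊤ ∧ ∀ y : ℝ, 0 < y →
    (∫⁻ x : ℝ, (‖g (x + y * Complex.I)‖₊ : ℝ≥0∞) ^ 2) ≤ C

/-- The de Branges space `H(E)` as a set of entire functions. -/
def deBrangesSpace (E : ℂ → ℂ) : Set (ℂ → ℂ) :=
  {f | Differentiable ℂ f ∧ MemHardyH2 (fun z => f z / E z) ∧
       MemHardyH2 (fun z => fStar f z / E z) ∧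
       (∫⁻ x : ℝ, (‖f x / E x‖₊ : ℝ≥0∞) ^ 2) < ⊤}

/-- The norm of `H(E)`: `‖f‖ = (∫_ℝ |f/E|² dx)^{1/2}`. -/
def dbNorm (E f : ℂ → ℂ) : ℝ := Real.sqrt (∫ x : ℝ, ‖f x / E x‖ ^ 2)

/-- The inner product of `H(E)`: `⟨f,g⟩ = ∫_ℝ f(x) conj (g x) |E(x)|⁻² dx`. -/
def dbInner (E f g : ℂ → ℂ) : ℂ :=
  ∫ x : ℝ, f x * conj (g x) * (((‖E x‖ ^ 2 : ℝ) : ℂ))⁻¹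

/-- `N` is a nearly invariant subspace of `H(E)` with no common zeros:
a norm-closed linear subspace of `H(E)` whose elements have no common zero, in which
zeros may be divided out. -/
def IsNearlyInvariantNoCommonZeros (E : ℂ → ℂ) (N : Set (ℂ → ℂ)) : Prop :=
  N ⊆ deBrangesSpace E ∧
  (fun _ => (0 : ℂ)) ∈ N ∧
  (∀ f ∈ N, ∀ g ∈ N, (fun z => f z + g z) ∈ N) ∧
  (∀ c : ℂ, ∀ f ∈ N, (fun z => c * f z) ∈ N) ∧
  (∀ f ∈ deBrangesSpace E,
    (∀ ε : ℝ, 0 < ε → ∃ g ∈ N, dbNorm E (fun z => f z - g z) < ε) → f ∈ N) ∧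
  (∀ lam : ℂ, ∃ f ∈ N, f lam ≠ 0) ∧
  (∀ f ∈ N, ∀ lam : ℂ, f lam = 0 → ∀ g : ℂ → ℂ, Differentiable ℂ g →
    (∀ z : ℂ, z ≠ lam → g z = f z / (z - lam)) → g ∈ N)

/-- `k` is the reproducing kernel of `N ⊆ H(E)`. -/
def IsReproducingKernel (E : ℂ → ℂ) (N : Set (ℂ → ℂ)) (k : ℂ → ℂ → ℂ) : Prop :=
  ∀ lam : ℂ, (fun z => k lam z) ∈ N ∧ ∀ f ∈ N, dbInner E f (fun z => k lam z) = f lam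

/-! Put `u = k_λ - (k(λ,α)/k(α,α)) k_α`, which vanishes at `α`, and
`v = k_z - (k(z,ᾱ)/k(ᾱ,ᾱ)) k_ᾱ`, which vanishes at `ᾱ`. Near invariance puts
`u/(w-α)` and `v/(w-ᾱ)` in `N`, and on the real line `1/(x-α)` moves across the inner
product as `1/(x-ᾱ)`, so `⟨u/(·-α), v⟩ = ⟨u, v/(·-ᾱ)⟩`. Expanding both sides with the
reproducing property gives the identity. The diagonal values do not vanish: if
`k(a,a) = ‖k_a‖² = 0` then `k_a = 0` a.e. on `ℝ`, so `f(a) = ⟨f, k_a⟩ = 0` for every `f ∈ N`. -/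

theorem conj_dbInner (E f g : ℂ → ℂ) : conj (dbInner E f g) = dbInner E g f := by
  rw [dbInner, dbInner, ← integral_conj]
  congr 1 with x
  simp only [map_mul, map_inv₀, conj_conj, conj_ofReal]
  ring

theorem dbInner_integrand_eq (E f g : ℂ → ℂ) (x : ℝ) :
    f x * conj (g x) * (((‖E x‖ ^ 2 : ℝ) : ℂ))⁻¹ = f x / E x * conj (g x / E x) := by
  rw [map_div₀, div_mul_div_comm, mul_conj, normSq_eq_norm_sq, div_eq_mul_inv]

theorem dbInner_self (E f : ℂ → ℂ) : dbInner E f f = ((∫ x : ℝ, ‖f x / E x‖ ^ 2 : ℝ) : ℂ) := by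
  rw [dbInner, ← integral_complex_ofReal]
  congr 1 with x
  rw [dbInner_integrand_eq, mul_conj, normSq_eq_norm_sq]

theorem memLp_div_of_mem_deBrangesSpace {E f : ℂ → ℂ} (hE : Continuous E)
    (hf : f ∈ deBrangesSpace E) : MemLp (fun x : ℝ => f x / E x) 2 := by
  obtain ⟨hfd, -, -, hfin⟩ := hf
  refine ⟨((hfd.continuous.comp continuous_ofReal).measurable.div
    (hE.comp continuous_ofReal).measurable).aestronglyMeasurable, ?_⟩
  rw [eLpNorm_lt_top_iff_lintegral_rpow_enorm_lt_top two_ne_zero ENNReal.ofNat_ne_top]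
  simpa only [ENNReal.toReal_ofNat, ENNReal.rpow_ofNat, enorm_eq_nnnorm] using hfin

theorem integrable_dbInner_integrand {E f g : ℂ → ℂ} (hE : Continuous E)
    (hf : f ∈ deBrangesSpace E) (hg : g ∈ deBrangesSpace E) :
    Integrable (fun x : ℝ => f x * conj (g x) * (((‖E x‖ ^ 2 : ℝ) : ℂ))⁻¹) := by
  have h := (memLp_div_of_mem_deBrangesSpace hE hg).star.mul (r := 1)
    (memLp_div_of_mem_deBrangesSpace hE hf)
  rw [memLp_one_iff_integrable] at h
  refine h.congr (.of_forall fun x => ?_)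
  exact (dbInner_integrand_eq E f g x).symm

theorem dbInner_sub_smul_right {E f g h : ℂ → ℂ} (hE : Continuous E)
    (hf : f ∈ deBrangesSpace E) (hg : g ∈ deBrangesSpace E) (hh : h ∈ deBrangesSpace E)
    (c : ℂ) :
    dbInner E f (fun w => g w - c * h w) = dbInner E f g - conj c * dbInner E f h := by
  rw [dbInner, dbInner, dbInner, ← integral_const_mul, ← integral_sub
    (integrable_dbInner_integrand hE hf hg) ((integrable_dbInner_integrand hE hf hh).const_mul _)]
  congr 1 with x
  simp only [map_sub, map_mul]
  ring

theorem dbInner_eq_zero_of_dbInner_self_eq_zero {E g : ℂ → ℂ} (hE : Continuous E)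
    (hg : g ∈ deBrangesSpace E) (hgg : dbInner E g g = 0) (f : ℂ → ℂ) :
    dbInner E f g = 0 := by
  rw [dbInner_self, ofReal_eq_zero, integral_eq_zero_iff_of_nonneg (fun x => by positivity)
    ((memLp_div_of_mem_deBrangesSpace hE hg).integrable_norm_pow two_ne_zero)] at hgg
  rw [dbInner, ← integral_zero ℝ ℂ]
  refine integral_congr_ae (hgg.mono fun x hx => ?_)
  simp only [Pi.zero_apply, pow_eq_zero_iff two_ne_zero, norm_eq_zero] at hx
  simp only [dbInner_integrand_eq, hx, map_zero, mul_zero]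

theorem dslope_of_eq_zero {𝕜 : Type*} [NontriviallyNormedField 𝕜] {f : 𝕜 → 𝕜} {a b : 𝕜} (hf : f a = 0) (hb : b ≠ a) :
    dslope f a b = f b / (b - a) := by
  rw [dslope_of_ne f hb, slope_def_field, hf, sub_zero]

theorem dbInner_dslope_left {E f g : ℂ → ℂ} {α : ℂ} (hα : α.im ≠ 0) (hf : f α = 0)
    (hg : g (conj α) = 0) :
    dbInner E (dslope f α) g = dbInner E f (dslope g (conj α)) := by
  rw [dbInner, dbInner]
  congr 1 with x
  have hx : (x : ℂ) ≠ α := fun h => hα (by rw [← h, ofReal_im])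
  have hx' : (x : ℂ) ≠ conj α := fun h => hα (by rw [← neg_eq_zero, ← conj_im, ← h, ofReal_im])
  rw [dslope_of_eq_zero hf hx, dslope_of_eq_zero hg hx', map_div₀, map_sub, conj_ofReal,
    conj_conj]
  ring

namespace IsNearlyInvariantNoCommonZeros

variable {E : ℂ → ℂ} {N : Set (ℂ → ℂ)} (hN : IsNearlyInvariantNoCommonZeros E N)
include hN

theorem sub_smul_mem {f g : ℂ → ℂ} (hf : f ∈ N) (hg : g ∈ N) (c : ℂ) :
    (fun w => f w - c * g w) ∈ N := by
  simpa only [sub_eq_add_neg, neg_mul] using hN.2.2.1 f hf _ (hN.2.2.2.1 (-c) g hg)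

theorem dslope_mem {f : ℂ → ℂ} (hf : f ∈ N) {a : ℂ} (hfa : f a = 0) : dslope f a ∈ N := by
  refine hN.2.2.2.2.2.2 f hf a hfa _ ?_ fun w hw => dslope_of_eq_zero hfa hw
  rw [← differentiableOn_univ, differentiableOn_dslope univ_mem]
  exact (hN.1 hf).1.differentiableOn

end IsNearlyInvariantNoCommonZeros

namespace IsReproducingKernel

variable {E : ℂ → ℂ} {N : Set (ℂ → ℂ)} {k : ℂ → ℂ → ℂ} (hk : IsReproducingKernel E N k)
include hk

theorem conj_apply (a b : ℂ) : conj (k a b) = k b a := by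
  rw [← (hk a).2 _ (hk b).1, ← (hk b).2 _ (hk a).1, conj_dbInner]

theorem dbInner_sub_smul (hE : Continuous E) (hN : N ⊆ deBrangesSpace E) {f : ℂ → ℂ}
    (hf : f ∈ N) (a b c : ℂ) :
    dbInner E f (fun w => k a w - c * k b w) = f a - conj c * f b := by
  rw [dbInner_sub_smul_right hE (hN hf) (hN (hk a).1) (hN (hk b).1), (hk a).2 f hf,
    (hk b).2 f hf]

theorem apply_self_ne_zero (hE : Continuous E) (hN : IsNearlyInvariantNoCommonZeros E N)
    (a : ℂ) : k a a ≠ 0 := by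
  intro hka
  obtain ⟨f, hf, hfa⟩ := hN.2.2.2.2.2.1 a
  rw [← (hk a).2 _ (hk a).1] at hka
  exact hfa ((hk a).2 f hf ▸ dbInner_eq_zero_of_dbInner_self_eq_zero hE (hN.1 (hk a).1) hka f)

end IsReproducingKernel

/-- The kernel identity obtained in the proof of the structure of reproducing kernels of
nearly invariant subspaces. -/
theorem kernel_identity
    (E : ℂ → ℂ) (hE : IsDeBrangesFunction E)
    (N : Set (ℂ → ℂ)) (hN : IsNearlyInvariantNoCommonZeros E N)
    (k : ℂ → ℂ → ℂ) (hk : IsReproducingKernel E N k)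
    (α : ℂ) (hα : α.im ≠ 0) :
    k α α ≠ 0 ∧ k (conj α) (conj α) ≠ 0 ∧
    ∀ lam : ℂ, lam ≠ conj α → ∀ z : ℂ, z ≠ α →
      ((z - conj α) / (z - α)) * (k lam z - (k lam α / k α α) * k α z)
          - ((conj lam - conj α) / (conj lam - α)) * k lam z
        = -(((conj lam - conj α) / (conj lam - α))
            * (k lam (conj α) / k (conj α) (conj α)) * k (conj α) z) := by
  have hEc : Continuous E := hE.1.continuous
  have hdiag := hk.apply_self_ne_zero hEc hN
  refine ⟨hdiag α, hdiag (conj α), fun lam hlam z hz => ?_⟩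
  set u : ℂ → ℂ := fun w => k lam w - k lam α / k α α * k α w
  set v : ℂ → ℂ := fun w => k z w - k z (conj α) / k (conj α) (conj α) * k (conj α) w
  have hu : u α = 0 := by simp only [u]; field_simp [hdiag α]; ring
  have hv : v (conj α) = 0 := by simp only [v]; field_simp [hdiag (conj α)]; ring
  have key := dbInner_dslope_left (E := E) hα hu hv
  rw [hk.dbInner_sub_smul hEc hN.1 (hN.dslope_mem (hN.sub_smul_mem (hk lam).1 (hk α).1 _) hu),
    ← conj_dbInner,
    hk.dbInner_sub_smul hEc hN.1 (hN.dslope_mem (hN.sub_smul_mem (hk z).1 (hk _).1 _) hv)] at key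
  have hconj : conj α ≠ α := fun h => hα (by linarith [congrArg im h, conj_im α])
  rw [dslope_of_eq_zero hu hz, dslope_of_eq_zero hu hconj, dslope_of_eq_zero hv hlam,
    dslope_of_eq_zero hv hconj.symm] at key
  simp only [u, v, map_sub, map_mul, map_div₀, conj_conj, hk.conj_apply] at key
  have hr : conj lam - α ≠ 0 := sub_ne_zero.2 fun h => hlam (by rw [← h, conj_conj])
  field_simp [hdiag α, hdiag (conj α), sub_ne_zero.2 hz, sub_ne_zero.2 hconj, hr] at key ⊢
  linear_combination -key
end
end

section
/- Let F and G be entire functions satisfying: (i) F(z)·conj(F(conj z)) = G(z)·conj(G(conj z)) for all z ∈ ℂ; (ii) |F(z)| > |G(z)| for all z with Im z < 0; (iii) |F(z)| < |G(z)| for all z with Im z > 0. Then there exists an entire function U with U(z) ≠ 0 for every z ∈ ℂ such that conj(G(conj z)) = U(z)·F(z) for all z ∈ ℂ, and moreover |U(x)| = 1 for every x ∈ ℝ (in particular |F(x)| = |G(x)| for every x ∈ ℝ). -/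
/-!
Since `F F* = G G*`, the orders of vanishing satisfy `ord F + ord F* = ord G + ord G*` at every
point. In the upper half-plane `G` and `F*` have no zeros, so `ord F = ord G*` there; in the lower
half-plane `F` has no zeros; and at a real point `ord F* = ord F` and `ord G* = ord G`, whence again
`ord F = ord G = ord G*`. Thus `U = G*/F` has only removable singularities. Substituting
`G* = U F` and `G = U* F*` into `F F* = G G*` gives `U U* = 1`, so `U` has no zeros and `|U| = 1`
on the real axis.
-/

open Complex MeasureTheory Filter ComplexConjugate
open scoped ENNReal Topology

noncomputable section

theorem ENat.add_self_injective : Function.Injective fun a : ℕ∞ => a + a := by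
  intro a b h
  simp only at h
  induction a using ENat.recTopCoe with
  | top => simpa [eq_comm] using h
  | coe m =>
    induction b using ENat.recTopCoe with
    | top => simp at h
    | coe n => norm_cast at h ⊢; omega

theorem AnalyticOnNhd.exists_analyticOnNhd_eqOn_mul_of_analyticOrderAt_le
    {𝕜 : Type*} [NontriviallyNormedField 𝕜] {f g : 𝕜 → 𝕜} {s : Set 𝕜}
    (hf : AnalyticOnNhd 𝕜 f s) (hg : AnalyticOnNhd 𝕜 g s)
    (hfg : ∀ z ∈ s, analyticOrderAt f z ≤ analyticOrderAt g z) :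
    ∃ u, AnalyticOnNhd 𝕜 u s ∧ Set.EqOn g (u * f) s := by
  have hm : MeromorphicOn (g / f) s := hg.meromorphicOn.div hf.meromorphicOn
  -- `toMeromorphicNFOn` fills in the removable singularities of `g / f`.
  have hu : AnalyticOnNhd 𝕜 (toMeromorphicNFOn (g / f) s) s := fun z hz => by
    rw [← (meromorphicNFOn_toMeromorphicNFOn _ _ hz).meromorphicOrderAt_nonneg_iff_analyticAt,
      meromorphicOrderAt_toMeromorphicNFOn hm hz,
      meromorphicOrderAt_div (hg z hz).meromorphicAt (hf z hz).meromorphicAt,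
      (hg z hz).meromorphicOrderAt_eq, (hf z hz).meromorphicOrderAt_eq]
    have hmono : (analyticOrderAt f z).map (↑) ≤ ((analyticOrderAt g z).map (↑) : WithTop ℤ) :=
      ENat.monotone_map_iff.2 Nat.mono_cast (hfg z hz)
    calc (0 : WithTop ℤ) ≤ (analyticOrderAt f z).map (↑) - (analyticOrderAt f z).map (↑) :=
          LinearOrderedAddCommGroupWithTop.sub_self_nonneg
      _ ≤ _ := by rw [sub_eq_add_neg, sub_eq_add_neg]; gcongr
  refine ⟨_, hu, fun z hz => ?_⟩
  rcases (hf z hz).eventually_eq_zero_or_eventually_ne_zero with hf0 | hf0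
  · have hg0 : analyticOrderAt g z = ⊤ := top_le_iff.1 (analyticOrderAt_eq_top.2 hf0 ▸ hfg z hz)
    simp [(analyticOrderAt_eq_top.1 hg0).self_of_nhds, hf0.self_of_nhds]
  · have : g =ᶠ[𝓝[≠] z] toMeromorphicNFOn (g / f) s * f := by
      filter_upwards [hm.toMeromorphicNFOn_eq_self_on_nhdsNE hz, hf0] with w hw hw'
      rw [Pi.mul_apply, hw, Pi.div_apply, div_mul_cancel₀ _ hw']
    exact ((hg z hz).continuousAt.eventuallyEq_nhds_iff_eventuallyEq_nhdsNE
      ((hu z hz).continuousAt.mul (hf z hz).continuousAt)).1 this |>.self_of_nhds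

theorem Differentiable.eq_zero_of_mul_eq_zero {f h : ℂ → ℂ} (hf : Differentiable ℂ f) {w : ℂ}
    (hw : f w ≠ 0) (hh : Continuous h) (hfh : f * h = 0) : h = 0 := by
  funext z
  rcases (hf.analyticAt z).eventually_eq_zero_or_eventually_ne_zero with hf0 | hf0
  · have hA := analyticOnNhd_univ_iff_differentiable.2 hf
    exact absurd (hA.eqOn_zero_of_preconnected_of_eventuallyEq_zero isPreconnected_univ
      (Set.mem_univ z) hf0 (Set.mem_univ w)) hw
  · have : h =ᶠ[𝓝[≠] z] 0 := by
      filter_upwards [hf0] with v hv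
      exact (mul_eq_zero.1 (congrFun hfh v)).resolve_left hv
    exact ((hh.continuousAt.eventuallyEq_nhds_iff_eventuallyEq_nhdsNE continuousAt_const).1
      this).self_of_nhds

@[simp] theorem fStar_apply (f : ℂ → ℂ) (z : ℂ) : fStar f z = conj (f (conj z)) := rfl

@[simp] theorem fStar_fStar (f : ℂ → ℂ) : fStar (fStar f) = f := by
  ext; simp

theorem fStar_mul (f g : ℂ → ℂ) : fStar (f * g) = fStar f * fStar g := by
  ext; simp

theorem mul_fStar_ofReal (f : ℂ → ℂ) (x : ℝ) : f x * fStar f x = (‖f x‖ ^ 2 : ℝ) := by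
  rw [fStar_apply, conj_ofReal, mul_conj, normSq_eq_norm_sq]

theorem norm_eq_norm_of_mul_fStar_eq {f g : ℂ → ℂ} {x : ℝ}
    (h : f x * fStar f x = g x * fStar g x) : ‖f x‖ = ‖g x‖ := by
  rw [mul_fStar_ofReal, mul_fStar_ofReal] at h
  exact (sq_eq_sq₀ (norm_nonneg _) (norm_nonneg _)).1 (by exact_mod_cast h)

theorem AnalyticAt.fStar {f : ℂ → ℂ} {z : ℂ} (hf : AnalyticAt ℂ f (conj z)) :
    AnalyticAt ℂ (fStar f) z := by
  rw [analyticAt_iff_eventually_differentiableAt] at hf ⊢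
  filter_upwards [(continuous_conj.tendsto z).eventually hf] with w hw
  exact differentiableAt_conj_conj_iff.2 hw

theorem Differentiable.fStar {f : ℂ → ℂ} (hf : Differentiable ℂ f) :
    Differentiable ℂ (fStar f) := fun z =>
  differentiableAt_conj_conj_iff.2 (hf (conj z))

theorem analyticOrderAt_fStar {f : ℂ → ℂ} {z : ℂ} (hf : AnalyticAt ℂ f (conj z)) :
    analyticOrderAt (fStar f) z = analyticOrderAt f (conj z) := by
  have hconj : Tendsto conj (𝓝 z) (𝓝 (conj z)) := continuous_conj.tendsto z
  by_cases htop : analyticOrderAt f (conj z) = ⊤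
  · rw [htop, analyticOrderAt_eq_top]
    filter_upwards [hconj.eventually (analyticOrderAt_eq_top.1 htop)] with w hw
    simp [hw]
  · obtain ⟨n, hn⟩ := ENat.ne_top_iff_exists.1 htop
    rw [← hn, hf.fStar.analyticOrderAt_eq_natCast]
    obtain ⟨φ, hφ, hφ0, hfφ⟩ := hf.analyticOrderAt_eq_natCast.1 hn.symm
    refine ⟨fStar φ, hφ.fStar, by simpa using hφ0, ?_⟩
    filter_upwards [hconj.eventually hfφ] with w hw
    simp [hw]

theorem analyticOrderAt_le_analyticOrderAt_fStar {F G : ℂ → ℂ} (hF : Differentiable ℂ F)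
    (hG : Differentiable ℂ G) (hFG : F * fStar F = G * fStar G)
    (hF0 : ∀ z : ℂ, z.im < 0 → F z ≠ 0) (hG0 : ∀ z : ℂ, 0 < z.im → G z ≠ 0) (z : ℂ) :
    analyticOrderAt F z ≤ analyticOrderAt (fStar G) z := by
  have hord : analyticOrderAt F z + analyticOrderAt (fStar F) z =
      analyticOrderAt G z + analyticOrderAt (fStar G) z := by
    rw [← analyticOrderAt_mul (hF.analyticAt z) (hF.fStar.analyticAt z),
      ← analyticOrderAt_mul (hG.analyticAt z) (hG.fStar.analyticAt z), hFG]
  rcases lt_trichotomy z.im 0 with him | him | him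
  · rw [(hF.analyticAt z).analyticOrderAt_eq_zero.2 (hF0 z him)]
    exact zero_le
  · have hz : conj z = z := conj_eq_iff_im.2 him
    rw [analyticOrderAt_fStar (hF.analyticAt _), analyticOrderAt_fStar (hG.analyticAt _), hz]
      at hord
    rw [analyticOrderAt_fStar (hG.analyticAt _), hz, ENat.add_self_injective hord]
  · have hFs : analyticOrderAt (fStar F) z = 0 :=
      (hF.fStar.analyticAt z).analyticOrderAt_eq_zero.2 <| by
        simpa using hF0 (conj z) (by simpa using him)
    rw [hFs, (hG.analyticAt z).analyticOrderAt_eq_zero.2 (hG0 z him)] at hord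
    simpa using hord.le

theorem mul_fStar_eq_one_of_fStar_eq_mul {F G U : ℂ → ℂ} (hF : Differentiable ℂ F)
    (hU : Differentiable ℂ U) {w : ℂ} (hw : F w ≠ 0) (hFG : F * fStar F = G * fStar G)
    (hGU : fStar G = U * F) : U * fStar U = 1 := by
  have hG : G = fStar U * fStar F := by rw [← fStar_fStar G, hGU, fStar_mul]
  rw [hG, fStar_mul, fStar_fStar, fStar_fStar] at hFG
  have h : F * (fStar F * (1 - U * fStar U)) = 0 := by linear_combination hFG
  have hUU : Continuous (1 - U * fStar U) :=
    continuous_const.sub (hU.continuous.mul hU.fStar.continuous)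
  have hcancelF := hF.eq_zero_of_mul_eq_zero hw (hF.fStar.continuous.mul hUU) h
  have hcancelFs := hF.fStar.eq_zero_of_mul_eq_zero (w := conj w) (by simpa using hw) hUU hcancelF
  exact (sub_eq_zero.1 hcancelFs).symm

/-- Claims (a) and (b) of Lemma 3: `U = G*/F` is a zero-free entire function which is
unimodular on the real axis. -/
theorem U_entire_nonvanishing_unimodular
    (F G : ℂ → ℂ) (hF : Differentiable ℂ F) (hG : Differentiable ℂ G)
    (h1 : ∀ z : ℂ, F z * conj (F (conj z)) = G z * conj (G (conj z)))
    (h2 : ∀ z : ℂ, z.im < 0 → ‖G z‖ < ‖F z‖)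
    (h3 : ∀ z : ℂ, 0 < z.im → ‖F z‖ < ‖G z‖) :
    ∃ U : ℂ → ℂ, Differentiable ℂ U ∧ (∀ z : ℂ, U z ≠ 0) ∧
      (∀ z : ℂ, conj (G (conj z)) = U z * F z) ∧
      (∀ x : ℝ, ‖U x‖ = 1) ∧
      (∀ x : ℝ, ‖F x‖ = ‖G x‖) := by
  have hFG : F * fStar F = G * fStar G := funext h1
  have hF0 (z : ℂ) (hz : z.im < 0) : F z ≠ 0 := fun h =>
    (norm_nonneg (G z)).not_gt (by simpa [h] using h2 z hz)
  have hG0 (z : ℂ) (hz : 0 < z.im) : G z ≠ 0 := fun h =>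
    (norm_nonneg (F z)).not_gt (by simpa [h] using h3 z hz)
  obtain ⟨U, hU, hGU⟩ := AnalyticOnNhd.exists_analyticOnNhd_eqOn_mul_of_analyticOrderAt_le
    (analyticOnNhd_univ_iff_differentiable.2 hF) (analyticOnNhd_univ_iff_differentiable.2 hG.fStar)
    fun z _ => analyticOrderAt_le_analyticOrderAt_fStar hF hG hFG hF0 hG0 z
  replace hU : Differentiable ℂ U := analyticOnNhd_univ_iff_differentiable.1 hU
  replace hGU : fStar G = U * F := funext fun z => hGU (Set.mem_univ z)
  have hUU := mul_fStar_eq_one_of_fStar_eq_mul hF hU (hF0 (-I) (by simp)) hFG hGU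
  refine ⟨U, hU, fun z => left_ne_zero_of_mul_eq_one (congrFun hUU z), congrFun hGU,
    fun x => ?_, fun x => norm_eq_norm_of_mul_fStar_eq (congrFun hFG x)⟩
  simpa using norm_eq_norm_of_mul_fStar_eq (g := 1) (by simpa using congrFun hUU x)
end
end
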